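/- arXiv:1106.0169 — 2 statements merged into one kernel-verified Lean document; each statement's English description precedes it below -/
import Mathlib

section
/- Let P, Q be complex polynomials without common factors, with deg P = λ and deg Q = μ, let f = P/Q, and let ζ ∈ ℂ with Q(ζ) ≠ 0. Then for all natural numbers p > λ and q > μ, f ∉ D_{p,q}(ζ); that is, the corresponding Hankel determinant of the Taylor coefficients of f at ζ vanishes. -/
open Filter
open Matrix

noncomputable def taylorCoeff (f : ℂ → ℂ) (ζ : ℂ) (v : ℕ) : ℂ :=
  iteratedDeriv v f ζ / (Nat.factorial v : ℂ)

noncomputable def coeffZ (a : ℕ → ℂ) (k : ℤ) : ℂ :=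
  if 0 ≤ k then a k.toNat else 0

/-- The q×q Hankel matrix with (i,j) entry `a (p-q+1+i+j)` (value 0 for negative index). -/
noncomputable def hankel (a : ℕ → ℂ) (p q : ℕ) : Matrix (Fin q) (Fin q) ℂ :=
  Matrix.of fun i j => coeffZ a ((p : ℤ) - (q : ℤ) + 1 + (i.1 : ℤ) + (j.1 : ℤ))

/-- `f ∈ D_{p,q}(ζ)` for the coefficient sequence `a` of `f` at `ζ`:
either `q = 0` or the Hankel determinant is nonzero. -/
def MemD (a : ℕ → ℂ) (p q : ℕ) : Prop :=
  q = 0 ∨ (hankel a p q).det ≠ 0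

/-- `Nu/De` (in the variable `w = z - ζ`) is a Padé approximant `[p/q]` of the series with
coefficients `a` : `deg Nu ≤ p`, `deg De ≤ q`, `De(0) = 1`, and the power series
`De(w)·Σ a_v w^v − Nu(w)` has vanishing coefficients in degrees `0,…,p+q`. -/
def IsPadeAt (a : ℕ → ℂ) (p q : ℕ) (Nu De : Polynomial ℂ) : Prop :=
  Nu.natDegree ≤ p ∧ De.natDegree ≤ q ∧ De.coeff 0 = 1 ∧
    ∀ k ≤ p + q, (∑ i ∈ Finset.range (k + 1), De.coeff i * a (k - i)) = Nu.coeff k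

/-- The Taylor coefficients of a function can be read off from any power series expansion. -/
lemma taylorCoeff_from_series {f : ℂ → ℂ} {ps : FormalMultilinearSeries ℂ ℂ ℂ} {ζ : ℂ}
    (h : HasFPowerSeriesAt f ps ζ) (n : ℕ) : taylorCoeff f ζ n = ps.coeff n := by
  obtain ⟨r, hr⟩ := h
  have h1 := hr.factorial_smul (1 : ℂ) n
  rw [taylorCoeff, iteratedDeriv_eq_iteratedFDeriv, ← h1, nsmul_eq_mul]
  rw [mul_div_cancel_left₀]
  · rfl
  · exact_mod_cast Nat.factorial_ne_zero n

lemma iteratedDeriv_polyEval (R : Polynomial ℂ) (n : ℕ) :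
    iteratedDeriv n (fun z => Polynomial.eval z R)
      = fun z => Polynomial.eval z (Polynomial.derivative^[n] R) := by
  induction n with
  | zero => simp
  | succ n ih =>
    rw [iteratedDeriv_succ, ih, Function.iterate_succ_apply']
    funext x
    exact Polynomial.deriv (p := Polynomial.derivative^[n] R)

lemma taylorCoeff_polyEval (R : Polynomial ℂ) (ζ : ℂ) (n : ℕ) :
    taylorCoeff (fun z => Polynomial.eval z R) ζ n = (Polynomial.taylor ζ R).coeff n := by
  rw [taylorCoeff, iteratedDeriv_polyEval, Polynomial.taylor_coeff]
  have h := congrFun (Polynomial.factorial_smul_hasseDeriv (R := ℂ) n) R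
  simp only [LinearMap.smul_apply] at h
  show Polynomial.eval ζ (Polynomial.derivative^[n] R) / _ = _
  rw [← h, nsmul_eq_mul, Polynomial.eval_mul, Polynomial.eval_natCast, mul_div_cancel_left₀]
  exact_mod_cast Nat.factorial_ne_zero n

/-- The convolution of the Taylor coefficients of `Q` with those of `P/Q` gives the Taylor
coefficients of `P`. -/
lemma conv_coeff (P Q : Polynomial ℂ) (ζ : ℂ) (hζ : Polynomial.eval ζ Q ≠ 0) (k : ℕ) :
    ∑ t ∈ Finset.range (k + 1), (Polynomial.taylor ζ Q).coeff t *
        taylorCoeff (fun z => Polynomial.eval z P / Polynomial.eval z Q) ζ (k - t)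
      = (Polynomial.taylor ζ P).coeff k := by
  classical
  set f : ℂ → ℂ := fun z => Polynomial.eval z P / Polynomial.eval z Q with hfdef
  have hPa : AnalyticAt ℂ (fun z => Polynomial.eval z P) ζ :=
    (Polynomial.differentiable P).analyticAt ζ
  have hQa : AnalyticAt ℂ (fun z => Polynomial.eval z Q) ζ :=
    (Polynomial.differentiable Q).analyticAt ζ
  have hfa : AnalyticAt ℂ f ζ := hPa.div hQa hζ
  obtain ⟨ps, hps⟩ := hfa
  set a : ℕ → ℂ := taylorCoeff f ζ with hadef
  have hcoeff : ∀ n, ps.coeff n = a n := fun n => (taylorCoeff_from_series hps n).symm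
  set b : ℕ → ℂ := fun t => (Polynomial.taylor ζ Q).coeff t with hbdef
  set μ := Q.natDegree with hμdef
  have hb0 : ∀ t, μ < t → b t = 0 := fun t ht =>
    Polynomial.coeff_eq_zero_of_natDegree_lt (by rwa [Polynomial.natDegree_taylor])
  set d : ℕ → ℂ := fun m => ∑ t ∈ Finset.range (m + 1), b t * a (m - t) with hddef
  have hsum := (hasFPowerSeriesAt_iff').mp hps
  have hQne : ∀ᶠ z in nhds ζ, Polynomial.eval z Q ≠ 0 :=
    ((Polynomial.continuous Q).continuousAt).eventually_ne hζ
  have hmain : ∀ᶠ z in nhds ζ, HasSum (fun m => (z - ζ) ^ m • d m) (Polynomial.eval z P) := by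
    filter_upwards [hsum, hQne] with z h1 h2
    set w : ℂ := z - ζ with hwdef
    simp only [hcoeff] at h1
    -- for each fixed t, a shifted summation
    have hterm : ∀ t : ℕ, HasSum (fun m => (if t ≤ m then b t * a (m - t) else 0) * w ^ m)
        (b t * w ^ t * f z) := by
      intro t
      have h3 : HasSum (fun n => (b t * w ^ t) * (w ^ n • a n)) ((b t * w ^ t) * f z) :=
        h1.mul_left _
      have h4 : (fun n => (if t ≤ n + t then b t * a (n + t - t) else 0) * w ^ (n + t))
          = fun n => (b t * w ^ t) * (w ^ n • a n) := by
        funext n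
        rw [if_pos (Nat.le_add_left t n), Nat.add_sub_cancel, pow_add, smul_eq_mul]
        ring
      have h5 := (hasSum_nat_add_iff
        (f := fun m => (if t ≤ m then b t * a (m - t) else 0) * w ^ m) t).mp (by rw [h4]; exact h3)
      have h6 : ∑ i ∈ Finset.range t, (if t ≤ i then b t * a (i - t) else 0) * w ^ i = 0 := by
        apply Finset.sum_eq_zero
        intro i hi
        simp only [Finset.mem_range] at hi
        rw [if_neg (by omega), zero_mul]
      rwa [h6, add_zero] at h5
    have h7 : ∀ m, ∑ t ∈ Finset.range (μ + 1), (if t ≤ m then b t * a (m - t) else 0) = d m := by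
      intro m
      have e1 : ∑ t ∈ Finset.range (μ + 1), (if t ≤ m then b t * a (m - t) else 0)
          = ∑ t ∈ Finset.range (μ + m + 2), (if t ≤ m then b t * a (m - t) else 0) := by
        apply Finset.sum_subset (Finset.range_subset_range.mpr (by omega))
        intro t ht1 ht2
        simp only [Finset.mem_range] at ht1 ht2
        have hμt : μ < t := by omega
        by_cases h : t ≤ m
        · rw [if_pos h, hb0 t hμt, zero_mul]
        · rw [if_neg h]
      have e2 : ∑ t ∈ Finset.range (μ + m + 2), (if t ≤ m then b t * a (m - t) else 0)
          = ∑ t ∈ Finset.range (m + 1), b t * a (m - t) := by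
        rw [← Finset.sum_filter]
        apply Finset.sum_congr _ (fun _ _ => rfl)
        ext t
        simp only [Finset.mem_filter, Finset.mem_range]
        omega
      rw [e1, e2, hddef]
    have hQsum : ∑ t ∈ Finset.range (μ + 1), b t * w ^ t = Polynomial.eval z Q := by
      have := Polynomial.eval_eq_sum_range (p := Polynomial.taylor ζ Q) w
      rw [Polynomial.natDegree_taylor] at this
      rw [← hμdef] at this
      rw [← this, hwdef, Polynomial.taylor_eval_sub]
    have h8 := hasSum_sum (s := Finset.range (μ + 1))
      (f := fun t m => (if t ≤ m then b t * a (m - t) else 0) * w ^ m)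
      (a := fun t => b t * w ^ t * f z) (fun t _ => hterm t)
    have h9 : (fun m => ∑ t ∈ Finset.range (μ + 1), (if t ≤ m then b t * a (m - t) else 0) * w ^ m)
        = fun m => w ^ m • d m := by
      funext m
      rw [← Finset.sum_mul, h7 m, smul_eq_mul, mul_comm]
    have h10 : ∑ t ∈ Finset.range (μ + 1), b t * w ^ t * f z = Polynomial.eval z P := by
      rw [← Finset.sum_mul, hQsum, hfdef]
      field_simp
    rw [h9, h10] at h8
    exact h8
  have hofs : ∀ n, (FormalMultilinearSeries.ofScalars ℂ d).coeff n = d n := by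
    intro n
    show FormalMultilinearSeries.ofScalars ℂ d n (fun _ => (1 : ℂ)) = d n
    rw [FormalMultilinearSeries.ofScalars_apply_eq]
    simp
  have hPps : HasFPowerSeriesAt (fun z => Polynomial.eval z P)
      (FormalMultilinearSeries.ofScalars ℂ d) ζ := by
    rw [hasFPowerSeriesAt_iff']
    simpa only [hofs] using hmain
  have hfin := taylorCoeff_from_series hPps k
  rw [taylorCoeff_polyEval, hofs] at hfin
  exact hfin.symm

theorem stmt1 (P Q : Polynomial ℂ) (hPQ : IsCoprime P Q) (lam mu : ℕ)
    (hP : P.natDegree = lam) (hQ : Q.natDegree = mu)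
    (f : ℂ → ℂ) (hf : f = fun z => Polynomial.eval z P / Polynomial.eval z Q)
    (ζ : ℂ) (hζ : Polynomial.eval ζ Q ≠ 0) :
    ∀ p : ℕ, lam < p → ∀ q : ℕ, mu < q →
      ¬ MemD (taylorCoeff f ζ) p q ∧ (hankel (taylorCoeff f ζ) p q).det = 0 := by
  subst hP hQ hf
  intro p hp q hq
  classical
  set a : ℕ → ℂ := taylorCoeff (fun z => Polynomial.eval z P / Polynomial.eval z Q) ζ with hadef
  set b : ℕ → ℂ := fun t => (Polynomial.taylor ζ Q).coeff t with hbdef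
  have hconv : ∀ k, ∑ t ∈ Finset.range (k + 1), b t * a (k - t)
      = (Polynomial.taylor ζ P).coeff k := fun k => conv_coeff P Q ζ hζ k
  have hb0 : ∀ t, Q.natDegree < t → b t = 0 := fun t ht =>
    Polynomial.coeff_eq_zero_of_natDegree_lt (by rwa [Polynomial.natDegree_taylor])
  have hcz : ∀ (t k : ℕ), coeffZ a ((k : ℤ) - t) = if t ≤ k then a (k - t) else 0 := by
    intro t k
    rw [coeffZ]
    split_ifs with h1 h2 h2
    · congr 1
      omega
    · omega
    · omega
    · rfl
  have key : ∀ k : ℕ, P.natDegree < k →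
      ∑ t ∈ Finset.range q, b t * coeffZ a ((k : ℤ) - t) = 0 := by
    intro k hk
    have e0 : ∑ t ∈ Finset.range q, b t * coeffZ a ((k : ℤ) - t)
        = ∑ t ∈ Finset.range q, (if t ≤ k then b t * a (k - t) else 0) := by
      refine Finset.sum_congr rfl fun t _ => ?_
      rw [hcz t k]
      split_ifs
      · rfl
      · rw [mul_zero]
    have e1 : ∑ t ∈ Finset.range q, (if t ≤ k then b t * a (k - t) else 0)
        = ∑ t ∈ Finset.range (q + k + 1), (if t ≤ k then b t * a (k - t) else 0) := by
      apply Finset.sum_subset (Finset.range_subset_range.mpr (by omega))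
      intro t ht1 ht2
      simp only [Finset.mem_range] at ht1 ht2
      by_cases h : t ≤ k
      · rw [if_pos h, hb0 t (by omega), zero_mul]
      · rw [if_neg h]
    have e2 : ∑ t ∈ Finset.range (q + k + 1), (if t ≤ k then b t * a (k - t) else 0)
        = ∑ t ∈ Finset.range (k + 1), b t * a (k - t) := by
      rw [← Finset.sum_filter]
      apply Finset.sum_congr _ (fun _ _ => rfl)
      ext t
      simp only [Finset.mem_filter, Finset.mem_range]
      omega
    rw [e0, e1, e2, hconv k]
    apply Polynomial.coeff_eq_zero_of_natDegree_lt
    rwa [Polynomial.natDegree_taylor]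
  have hdet : (hankel a p q).det = 0 := by
    rw [← Matrix.exists_mulVec_eq_zero_iff]
    refine ⟨fun j => b (q - 1 - j.1), ?_, ?_⟩
    · intro h0
      have h1 := congrFun h0 ⟨q - 1, by omega⟩
      simp only [Pi.zero_apply, Nat.sub_self] at h1
      apply hζ
      have hb00 : b 0 = Polynomial.eval ζ Q := Polynomial.taylor_coeff_zero ζ Q
      rw [← hb00]
      exact h1
    · funext i
      have step1 : (hankel a p q *ᵥ (fun j => b (q - 1 - j.1))) i
          = ∑ j ∈ Finset.range q,
            coeffZ a ((p : ℤ) - (q : ℤ) + 1 + (i.1 : ℤ) + (j : ℤ)) * b (q - 1 - j) := by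
        rw [Matrix.mulVec, dotProduct]
        rw [← Fin.sum_univ_eq_sum_range
          (fun j => coeffZ a ((p : ℤ) - (q : ℤ) + 1 + (i.1 : ℤ) + (j : ℤ)) * b (q - 1 - j)) q]
        rfl
      rw [step1, ← Finset.sum_range_reflect]
      have step2 : ∀ t ∈ Finset.range q,
          coeffZ a ((p : ℤ) - (q : ℤ) + 1 + (i.1 : ℤ) + ((q - 1 - t : ℕ) : ℤ))
              * b (q - 1 - (q - 1 - t))
          = b t * coeffZ a (((p + i.1 : ℕ) : ℤ) - t) := by
        intro t ht
        simp only [Finset.mem_range] at ht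
        have e1 : q - 1 - (q - 1 - t) = t := by omega
        have e2 : (p : ℤ) - (q : ℤ) + 1 + (i.1 : ℤ) + ((q - 1 - t : ℕ) : ℤ)
            = ((p + i.1 : ℕ) : ℤ) - t := by omega
        rw [e1, e2, mul_comm]
      rw [Finset.sum_congr rfl step2]
      simpa using key (p + i.1) (by omega)
  refine ⟨?_, hdet⟩
  rintro (h0 | hne)
  · omega
  · exact hne hdet
end

section
/- Let Ω ⊆ ℂ be a simply connected open set, let K, L be compact subsets of Ω, let s ≥ 1 be an integer and let (p,q) ∈ ℕ×ℕ. Then the set E(Ω,K,L,s,(p,q)) is open in H(Ω). -/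
open Filter

/-- The holomorphic functions on `Ω` (as functions `ℂ → ℂ`). -/
def Hol (Ω : Set ℂ) : Set (ℂ → ℂ) := {f | DifferentiableOn ℂ f Ω}

/-- `E` is open in `H(Ω)` with the topology of uniform convergence on compacta. -/
def HOpen (Ω : Set ℂ) (E : Set (ℂ → ℂ)) : Prop :=
  E ⊆ Hol Ω ∧ ∀ g ∈ E, ∃ T : Set ℂ, T ⊆ Ω ∧ IsCompact T ∧ ∃ δ : ℝ, 0 < δ ∧
    ∀ f ∈ Hol Ω, (∀ z ∈ T, ‖f z - g z‖ < δ) → f ∈ E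

/-- `D` is dense in `H(Ω)` with the topology of uniform convergence on compacta. -/
def HDense (Ω : Set ℂ) (D : Set (ℂ → ℂ)) : Prop :=
  ∀ g ∈ Hol Ω, ∀ T : Set ℂ, T ⊆ Ω → IsCompact T → ∀ ε : ℝ, 0 < ε →
    ∃ f ∈ D, ∀ z ∈ T, ‖f z - g z‖ < ε

/-- `S` is a Gδ subset of `H(Ω)`: a countable intersection of open subsets of `H(Ω)`. -/
def HGdelta (Ω : Set ℂ) (S : Set (ℂ → ℂ)) : Prop :=
  ∃ E : ℕ → Set (ℂ → ℂ), (∀ n, HOpen Ω (E n)) ∧ S = ⋂ n, E n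

/-- A Padé approximant `[p/q]` of the series `a` centered at `ζ` has no poles in `K` and is
uniformly `ε`-close to `f` on `K`. -/
def PadeApproxOn (a : ℕ → ℂ) (ζ : ℂ) (p q : ℕ) (f : ℂ → ℂ) (K : Set ℂ) (ε : ℝ) : Prop :=
  ∃ Nu De : Polynomial ℂ, IsPadeAt a p q Nu De ∧
    (∀ z ∈ K, Polynomial.eval (z - ζ) De ≠ 0) ∧
    ∀ z ∈ K, ‖Polynomial.eval (z - ζ) Nu / Polynomial.eval (z - ζ) De - f z‖ < ε

/-- The set `E(Ω,K,L,s,(p,q))`. -/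
def ESet (Ω K L : Set ℂ) (s p q : ℕ) : Set (ℂ → ℂ) :=
  {g | DifferentiableOn ℂ g Ω ∧ ∀ ζ ∈ L,
    MemD (taylorCoeff g ζ) p q ∧ PadeApproxOn (taylorCoeff g ζ) ζ p q g K (1 / (s : ℝ))}

/-- The set `U(Ω,F,K,L)`. -/
def USet (Ω : Set ℂ) (F : Set (ℕ × ℕ)) (K L : Set ℂ) : Set (ℂ → ℂ) :=
  {f | DifferentiableOn ℂ f Ω ∧ ∃ pq : ℕ → ℕ × ℕ, (∀ n, pq n ∈ F) ∧
    (∀ n, ∀ ζ ∈ L, MemD (taylorCoeff f ζ) (pq n).1 (pq n).2) ∧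
    (∃ N : ℕ, ∀ n ≥ N, ∀ ζ ∈ L, ∃ Nu De : Polynomial ℂ,
      IsPadeAt (taylorCoeff f ζ) (pq n).1 (pq n).2 Nu De ∧
      ∀ z ∈ K, Polynomial.eval (z - ζ) De ≠ 0) ∧
    (∀ ε : ℝ, 0 < ε → ∃ N : ℕ, ∀ n ≥ N, ∀ ζ ∈ L,
      PadeApproxOn (taylorCoeff f ζ) ζ (pq n).1 (pq n).2 f K ε)}

/-!
When the Hankel determinant is nonzero, the denominator of the Padé approximant `[p/q]` of a
series is the unique solution of a linear system with that Hankel matrix, and the numerator is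
read off from it; so the approximant depends only on the first `p + q + 1` coefficients, and
continuously on them (and on the point) wherever the determinant does not vanish. Hence the
conditions defining `E` say that the compact set of triples (Taylor coefficients of `g` at `ζ`,
`z - ζ`, `g z`), `ζ ∈ L`, `z ∈ K`, lies in an open set, so a uniform neighbourhood of it does too.
By Cauchy's estimates, if `f` is uniformly close to `g` on a compact neighbourhood of `K ∪ L`,
the Taylor coefficients of `f` at every `ζ ∈ L` are uniformly close to those of `g`.
-/

open Polynomial Finset Matrix Metric Topology
open scoped Nat

lemma sum_range_eq_of_eq_zero {M : Type*} [AddCommMonoid M] {f : ℕ → M} {m n : ℕ}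
    (hm : ∀ i ≥ m, f i = 0) (hn : ∀ i ≥ n, f i = 0) :
    ∑ i ∈ range m, f i = ∑ i ∈ range n, f i := by
  have key : ∀ {m n}, (∀ i ≥ m, f i = 0) → ∑ i ∈ range m, f i = ∑ i ∈ range (m + n), f i :=
    fun hm => sum_subset (range_subset_range.2 (by omega)) fun i _ hi => hm i (by simpa using hi)
  rw [key hm, add_comm, ← key hn]

lemma eq_one_add_sum_coeff_sub {R : Type*} [Semiring R] {D : R[X]} {q : ℕ}
    (hD : D.natDegree ≤ q) (hD0 : D.coeff 0 = 1) :
    D = 1 + ∑ j : Fin q, C (D.coeff (q - j)) * X ^ (q - j) := by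
  conv_lhs => rw [D.as_sum_range_C_mul_X_pow' (Nat.lt_succ_of_le hD), sum_range_succ',
    ← sum_range_reflect]
  rw [Fin.sum_univ_eq_sum_range (fun j => C (D.coeff (q - j)) * X ^ (q - j)), hD0, C_1,
    pow_zero, mul_one, add_comm]
  congr 1
  refine sum_congr rfl fun j hj => ?_
  have : q - 1 - j + 1 = q - j := by have := mem_range.1 hj; omega
  rw [this]

@[fun_prop]
lemma continuousAt_finsetSum {X M ι : Type*} [TopologicalSpace X] [TopologicalSpace M]
    [AddCommMonoid M] [ContinuousAdd M] {f : ι → X → M} {x : X} (s : Finset ι)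
    (hf : ∀ i ∈ s, ContinuousAt (f i) x) : ContinuousAt (fun y => ∑ i ∈ s, f i y) x :=
  tendsto_finsetSum s hf

lemma IsCompact.exists_pos_ball_image_subset {X Y : Type*} [TopologicalSpace X]
    [PseudoMetricSpace Y] {A : Set X} {F : X → Y} {U : Set Y} (hA : IsCompact A)
    (hF : ContinuousOn F A) (hU : IsOpen U) (hAU : ∀ x ∈ A, F x ∈ U) :
    ∃ η > 0, ∀ x ∈ A, ball (F x) η ⊆ U := by
  obtain ⟨η, hη, hsub⟩ := (hA.image_of_continuousOn hF).exists_thickening_subset_open hU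
    (Set.forall_mem_image.2 hAU)
  exact ⟨η, hη, fun x hx y hy => hsub (mem_thickening_iff.2 ⟨F x, ⟨x, hx, rfl⟩, hy⟩)⟩

lemma memD_iff_det_ne_zero (a : ℕ → ℂ) (p q : ℕ) : MemD a p q ↔ (hankel a p q).det ≠ 0 := by
  refine ⟨?_, Or.inr⟩
  rintro (rfl | h)
  · simp [Matrix.det_isEmpty]
  · exact h

lemma coeffZ_natCast (a : ℕ → ℂ) (k : ℕ) : coeffZ a k = a k := by
  simp [coeffZ]

lemma coeffZ_of_neg (a : ℕ → ℂ) {k : ℤ} (hk : k < 0) : coeffZ a k = 0 := by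
  simp [coeffZ, hk.not_ge]

section Pade

variable (a : ℕ → ℂ) (p q : ℕ)

/-- Coefficients `p + 1, …, p + q` of `D · ∑ aᵥ Xᵛ` vanish iff
`hankel a p q *ᵥ (D.coeff q, …, D.coeff 1) = padeRhs a p q`, see
`sum_coeff_mul_eq_add_hankel_mulVec`. -/
noncomputable def padeRhs : Fin q → ℂ := fun r => -a (p + 1 + r)

noncomputable def padeDenCoeffs : Fin q → ℂ := (hankel a p q)⁻¹ *ᵥ padeRhs a p q

noncomputable def padeDen : ℂ[X] := 1 + ∑ j : Fin q, C (padeDenCoeffs a p q j) * X ^ (q - j)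

noncomputable def padeNum : ℂ[X] :=
  ∑ k ∈ range (p + 1), C (∑ i ∈ range (k + 1), (padeDen a p q).coeff i * a (k - i)) * X ^ k

variable {a p q}

lemma sum_coeff_mul_eq_add_hankel_mulVec {D : ℂ[X]} (hD : D.natDegree ≤ q) (hD0 : D.coeff 0 = 1)
    (r : Fin q) :
    ∑ i ∈ range (p + 1 + r + 1), D.coeff i * a (p + 1 + r - i) =
      a (p + 1 + r) + (hankel a p q *ᵥ fun j => D.coeff (q - j)) r := by
  set k := p + 1 + (r : ℕ)
  set T : ℕ → ℂ := fun i => D.coeff (i + 1) * coeffZ a ((k : ℤ) - (i + 1 : ℕ))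
  have hlhs : ∑ i ∈ range (k + 1), D.coeff i * a (k - i) = ∑ i ∈ range k, T i + a k := by
    rw [sum_range_succ', hD0, one_mul, Nat.sub_zero]
    congr 1
    refine sum_congr rfl fun i hi => ?_
    simp only [T, ← Nat.cast_sub (mem_range.1 hi), coeffZ_natCast]
  have hrhs : (hankel a p q *ᵥ fun j => D.coeff (q - j)) r = ∑ i ∈ range q, T i := by
    rw [Matrix.mulVec, dotProduct, ← sum_range_reflect,
      ← Fin.sum_univ_eq_sum_range (fun j => T (q - 1 - j))]
    refine sum_congr rfl fun j _ => ?_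
    have hj := j.isLt
    simp only [T, hankel, of_apply, show q - 1 - j + 1 = q - j by omega]
    rw [mul_comm]
    congr 2
    rw [Nat.cast_sub hj.le]
    simp only [k]
    push_cast
    ring
  rw [hlhs, hrhs, add_comm]
  congr 1
  refine sum_range_eq_of_eq_zero (fun i hi => ?_) fun i hi => ?_
  · simp only [T, coeffZ_of_neg a (by omega : (k : ℤ) - (i + 1 : ℕ) < 0), mul_zero]
  · simp only [T, coeff_eq_zero_of_natDegree_lt (by omega : D.natDegree < i + 1), zero_mul]

lemma hankel_mulVec_padeDenCoeffs (h : (hankel a p q).det ≠ 0) :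
    hankel a p q *ᵥ padeDenCoeffs a p q = padeRhs a p q := by
  rw [padeDenCoeffs, Matrix.mulVec_mulVec, Matrix.mul_nonsing_inv _ h.isUnit, Matrix.one_mulVec]

lemma coeff_padeDen (i : ℕ) :
    (padeDen a p q).coeff i =
      (if i = 0 then 1 else 0) + ∑ j : Fin q, padeDenCoeffs a p q j * (X ^ (q - j)).coeff i := by
  simp only [padeDen, coeff_add, coeff_one, finsetSum_coeff, coeff_C_mul]

lemma coeff_padeDen_zero : (padeDen a p q).coeff 0 = 1 := by
  rw [coeff_padeDen, if_pos rfl, add_eq_left]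
  exact sum_eq_zero fun j _ => by rw [coeff_X_pow, if_neg (by omega), mul_zero]

lemma coeff_padeDen_sub (j : Fin q) : (padeDen a p q).coeff (q - j) = padeDenCoeffs a p q j := by
  rw [coeff_padeDen, if_neg (by omega), zero_add, sum_eq_single j]
  · rw [coeff_X_pow_self, mul_one]
  · intro j' _ hj'
    rw [coeff_X_pow, if_neg (fun h => hj' (Fin.ext (by omega))), mul_zero]
  · simp

lemma natDegree_padeDen_le : (padeDen a p q).natDegree ≤ q := by
  refine natDegree_add_le_of_degree_le (by simp) (natDegree_sum_le_of_forall_le _ _ fun j _ => ?_)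
  exact (natDegree_C_mul_X_pow_le _ _).trans (Nat.sub_le _ _)

lemma coeff_padeNum (k : ℕ) :
    (padeNum a p q).coeff k =
      if k ≤ p then ∑ i ∈ range (k + 1), (padeDen a p q).coeff i * a (k - i) else 0 := by
  simp only [padeNum, finsetSum_coeff, coeff_C_mul_X_pow]
  split_ifs with hk
  · rw [sum_ite_eq, if_pos (mem_range.2 (by omega))]
  · exact sum_eq_zero fun i hi => if_neg (by have := mem_range.1 hi; omega)

lemma natDegree_padeNum_le : (padeNum a p q).natDegree ≤ p :=
  natDegree_sum_le_of_forall_le _ _ fun _ hk =>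
    (natDegree_C_mul_X_pow_le _ _).trans (Nat.lt_succ_iff.1 (mem_range.1 hk))

theorem isPadeAt_padeNum_padeDen (h : (hankel a p q).det ≠ 0) :
    IsPadeAt a p q (padeNum a p q) (padeDen a p q) := by
  refine ⟨natDegree_padeNum_le, natDegree_padeDen_le, coeff_padeDen_zero, fun k hk => ?_⟩
  rw [coeff_padeNum]
  split_ifs with hkp
  · rfl
  obtain ⟨r, rfl⟩ : ∃ r : Fin q, k = p + 1 + r := ⟨⟨k - p - 1, by omega⟩, by dsimp only; omega⟩
  rw [sum_coeff_mul_eq_add_hankel_mulVec natDegree_padeDen_le coeff_padeDen_zero]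
  simp [coeff_padeDen_sub, hankel_mulVec_padeDenCoeffs h, padeRhs]

theorem IsPadeAt.eq_padeDen (h : (hankel a p q).det ≠ 0) {Nu De : ℂ[X]}
    (hP : IsPadeAt a p q Nu De) : De = padeDen a p q := by
  obtain ⟨hNu, hDe, hDe0, hcoeff⟩ := hP
  have hsys : hankel a p q *ᵥ (fun j : Fin q => De.coeff (q - j)) = padeRhs a p q := by
    funext r
    have := hcoeff (p + 1 + r) (by omega)
    rw [sum_coeff_mul_eq_add_hankel_mulVec hDe hDe0, coeff_eq_zero_of_natDegree_lt (by omega)]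
      at this
    rw [padeRhs]
    linear_combination this
  have hsol : (fun j : Fin q => De.coeff (q - j)) = padeDenCoeffs a p q := by
    rw [padeDenCoeffs, ← hsys, mulVec_mulVec, nonsing_inv_mul _ h.isUnit, one_mulVec]
  rw [eq_one_add_sum_coeff_sub hDe hDe0, padeDen, ← hsol]

theorem IsPadeAt.eq_padeNum (h : (hankel a p q).det ≠ 0) {Nu De : ℂ[X]}
    (hP : IsPadeAt a p q Nu De) : Nu = padeNum a p q := by
  rw [Nu.as_sum_range_C_mul_X_pow' (Nat.lt_succ_of_le hP.1), padeNum, ← hP.eq_padeDen h]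
  exact sum_congr rfl fun k hk => by rw [hP.2.2.2 k (by have := mem_range.1 hk; omega)]

end Pade

section Continuity

variable {p q : ℕ} {a : ℕ → ℂ}

lemma continuous_hankel : Continuous fun a : ℕ → ℂ => hankel a p q := by
  refine continuous_matrix fun i j => ?_
  simp only [hankel, of_apply, coeffZ]
  split_ifs
  exacts [continuous_apply _, continuous_const]

lemma continuousAt_padeDenCoeffs (h : (hankel a p q).det ≠ 0) :
    ContinuousAt (fun a => padeDenCoeffs a p q) a := by
  have hdet : ContinuousAt Ring.inverse (hankel a p q).det := by
    rw [Ring.inverse_eq_inv']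
    exact continuousAt_inv₀ h
  have hinv : ContinuousAt (fun a : ℕ → ℂ => (hankel a p q)⁻¹) a :=
    (continuousAt_matrix_inv _ hdet).comp (f := fun a => hankel a p q)
      continuous_hankel.continuousAt
  have hrhs : Continuous fun a : ℕ → ℂ => padeRhs a p q :=
    continuous_pi fun r => (continuous_apply _).neg
  have hmulVec : Continuous fun x : Matrix (Fin q) (Fin q) ℂ × (Fin q → ℂ) => x.1 *ᵥ x.2 :=
    continuous_fst.matrix_mulVec continuous_snd
  exact hmulVec.continuousAt.comp (f := fun a => ((hankel a p q)⁻¹, padeRhs a p q))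
    (hinv.prodMk hrhs.continuousAt)

lemma continuousAt_coeff_padeDen (h : (hankel a p q).det ≠ 0) (i : ℕ) :
    ContinuousAt (fun a => (padeDen a p q).coeff i) a := by
  simp only [coeff_padeDen]
  have := continuousAt_pi.1 (continuousAt_padeDenCoeffs h)
  fun_prop

lemma continuousAt_eval_padeDen (h : (hankel a p q).det ≠ 0) (w : ℂ) :
    ContinuousAt (fun x : (ℕ → ℂ) × ℂ => (padeDen x.1 p q).eval x.2) (a, w) := by
  simp only [padeDen, eval_add, eval_one, eval_finsetSum, eval_mul, eval_C, eval_pow, eval_X]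
  have := fun j => (continuousAt_pi.1 (continuousAt_padeDenCoeffs h) j).fst' (y := w)
  fun_prop

lemma continuousAt_eval_padeNum (h : (hankel a p q).det ≠ 0) (w : ℂ) :
    ContinuousAt (fun x : (ℕ → ℂ) × ℂ => (padeNum x.1 p q).eval x.2) (a, w) := by
  simp only [padeNum, eval_finsetSum, eval_mul, eval_C, eval_pow, eval_X]
  have := fun i => (continuousAt_coeff_padeDen h i).fst' (y := w)
  fun_prop

end Continuity

section Truncation

variable {p q : ℕ} {a b : ℕ → ℂ}

lemma hankel_congr (h : ∀ k ≤ p + q, a k = b k) : hankel a p q = hankel b p q := by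
  ext i j
  simp only [hankel, of_apply, coeffZ]
  split_ifs
  · exact h _ (by omega)
  · rfl

lemma padeDen_congr (h : ∀ k ≤ p + q, a k = b k) : padeDen a p q = padeDen b p q := by
  have hrhs : padeRhs a p q = padeRhs b p q := funext fun r => by
    rw [padeRhs, padeRhs, h _ (by omega)]
  simp only [padeDen, padeDenCoeffs, hankel_congr h, hrhs]

lemma padeNum_congr (h : ∀ k ≤ p + q, a k = b k) : padeNum a p q = padeNum b p q := by
  simp only [padeNum, padeDen_congr h]
  refine sum_congr rfl fun k hk => ?_
  congr 2
  refine sum_congr rfl fun i hi => ?_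
  rw [h _ (by have := mem_range.1 hk; omega)]

end Truncation

def PadeClose (p q : ℕ) (ε : ℝ) (a : ℕ → ℂ) (w y : ℂ) : Prop :=
  (hankel a p q).det ≠ 0 ∧ (padeDen a p q).eval w ≠ 0 ∧
    ‖(padeNum a p q).eval w / (padeDen a p q).eval w - y‖ < ε

section PadeClose

variable {p q : ℕ} {ε : ℝ}

lemma padeClose_congr {a b : ℕ → ℂ} (h : ∀ k ≤ p + q, a k = b k) (w y : ℂ) :
    PadeClose p q ε a w y ↔ PadeClose p q ε b w y := by
  simp only [PadeClose, hankel_congr h, padeDen_congr h, padeNum_congr h]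

lemma padeApproxOn_iff {a : ℕ → ℂ} (h : (hankel a p q).det ≠ 0) {ζ : ℂ} {f : ℂ → ℂ}
    {K : Set ℂ} : PadeApproxOn a ζ p q f K ε ↔ ∀ z ∈ K, PadeClose p q ε a (z - ζ) (f z) := by
  constructor
  · rintro ⟨Nu, De, hP, hDe, hclose⟩ z hz
    obtain rfl := hP.eq_padeNum h
    obtain rfl := hP.eq_padeDen h
    exact ⟨h, hDe z hz, hclose z hz⟩
  · intro hclose
    exact ⟨_, _, isPadeAt_padeNum_padeDen h, fun z hz => (hclose z hz).2.1,
      fun z hz => (hclose z hz).2.2⟩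

lemma isOpen_setOf_padeClose :
    IsOpen {x : (ℕ → ℂ) × ℂ × ℂ | PadeClose p q ε x.1 x.2.1 x.2.2} := by
  refine isOpen_iff_mem_nhds.2 fun ⟨a, w, y⟩ ⟨hdet, hden, hclose⟩ => ?_
  set pair : (ℕ → ℂ) × ℂ × ℂ → (ℕ → ℂ) × ℂ := fun x => (x.1, x.2.1)
  have hpair : ContinuousAt pair (a, w, y) := by fun_prop
  have hD : ContinuousAt (fun x : (ℕ → ℂ) × ℂ × ℂ => (padeDen x.1 p q).eval x.2.1) (a, w, y) :=
    (continuousAt_eval_padeDen hdet w).comp (f := pair) hpair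
  have hN : ContinuousAt (fun x : (ℕ → ℂ) × ℂ × ℂ => (padeNum x.1 p q).eval x.2.1) (a, w, y) :=
    (continuousAt_eval_padeNum hdet w).comp (f := pair) hpair
  have hdetc : ContinuousAt (fun x : (ℕ → ℂ) × ℂ × ℂ => (hankel x.1 p q).det) (a, w, y) :=
    (continuous_hankel.matrix_det.comp continuous_fst).continuousAt
  have herr : ContinuousAt (fun x : (ℕ → ℂ) × ℂ × ℂ =>
      ‖(padeNum x.1 p q).eval x.2.1 / (padeDen x.1 p q).eval x.2.1 - x.2.2‖) (a, w, y) :=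
    ((hN.div hD hden).sub continuousAt_snd.snd).norm
  filter_upwards [hdetc.eventually_ne hdet, hD.eventually_ne hden,
    herr.eventually_lt continuousAt_const hclose] with x h₁ h₂ h₃ using ⟨h₁, h₂, h₃⟩

end PadeClose

section Vectors

/- `ℕ → ℂ` carries no metric; as the Padé data only see the first `p + q + 1` coefficients,
perturbations of the coefficients are measured in `Fin (p + q + 1) → ℂ`. -/
def truncVec (N : ℕ) (a : ℕ → ℂ) : Fin N → ℂ := fun i => a i

variable {N : ℕ}

def extendZero (c : Fin N → ℂ) : ℕ → ℂ := fun k => if h : k < N then c ⟨k, h⟩ else 0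

lemma extendZero_truncVec (a : ℕ → ℂ) {k : ℕ} (hk : k < N) :
    extendZero (truncVec N a) k = a k := by
  simp [extendZero, truncVec, hk]

lemma continuous_extendZero : Continuous (extendZero : (Fin N → ℂ) → ℕ → ℂ) := by
  refine continuous_pi fun k => ?_
  simp only [extendZero]
  split_ifs
  exacts [continuous_apply _, continuous_const]

variable (p q : ℕ) (ε : ℝ)

def hankelDetNeZeroSet : Set (Fin (p + q + 1) → ℂ) := {c | (hankel (extendZero c) p q).det ≠ 0}

def padeCloseSet : Set ((Fin (p + q + 1) → ℂ) × ℂ × ℂ) :=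
  {x | PadeClose p q ε (extendZero x.1) x.2.1 x.2.2}

lemma isOpen_hankelDetNeZeroSet : IsOpen (hankelDetNeZeroSet p q) :=
  isOpen_ne_fun (continuous_hankel.matrix_det.comp continuous_extendZero) continuous_const

lemma isOpen_padeCloseSet : IsOpen (padeCloseSet p q ε) :=
  isOpen_setOf_padeClose.preimage
    ((continuous_extendZero.comp continuous_fst).prodMk continuous_snd)

variable {p q ε}

lemma memD_and_padeApproxOn_iff {a : ℕ → ℂ} {ζ : ℂ} {f : ℂ → ℂ} {K : Set ℂ} :
    MemD a p q ∧ PadeApproxOn a ζ p q f K ε ↔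
      truncVec _ a ∈ hankelDetNeZeroSet p q ∧
        ∀ z ∈ K, (truncVec _ a, z - ζ, f z) ∈ padeCloseSet p q ε := by
  have hagree : ∀ k ≤ p + q, extendZero (truncVec (p + q + 1) a) k = a k :=
    fun k hk => extendZero_truncVec a (by omega)
  simp only [hankelDetNeZeroSet, padeCloseSet, Set.mem_ofPred_eq, hankel_congr hagree,
    padeClose_congr hagree, memD_iff_det_ne_zero]
  exact and_congr_right fun h => padeApproxOn_iff h

end Vectors

section Taylor

variable {Ω : Set ℂ} {f g : ℂ → ℂ}

lemma continuousOn_taylorCoeff (hΩ : IsOpen Ω) (hg : DifferentiableOn ℂ g Ω) (n : ℕ) :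
    ContinuousOn (fun ζ => taylorCoeff g ζ n) Ω :=
  (((hg.contDiffOn hΩ (n := n)).continuousOn_iteratedDerivWithin le_rfl hΩ.uniqueDiffOn).congr
    fun _ hζ => (iteratedDerivWithin_of_isOpen hΩ hζ).symm).div_const _

lemma norm_taylorCoeff_sub_le (hΩ : IsOpen Ω) (hf : DifferentiableOn ℂ f Ω)
    (hg : DifferentiableOn ℂ g Ω) {ζ : ℂ} {r δ : ℝ} (hr : 0 < r) (hball : closedBall ζ r ⊆ Ω)
    (hfg : ∀ z ∈ sphere ζ r, ‖f z - g z‖ ≤ δ) (n : ℕ) :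
    ‖taylorCoeff f ζ n - taylorCoeff g ζ n‖ ≤ δ / r ^ n := by
  have hζ : Ω ∈ 𝓝 ζ := hΩ.mem_nhds (hball (mem_closedBall_self hr.le))
  have hsub : taylorCoeff f ζ n - taylorCoeff g ζ n =
      iteratedDeriv n (fun z => f z - g z) ζ / n ! := by
    rw [taylorCoeff, taylorCoeff, iteratedDeriv_fun_sub ((hf.contDiffOn hΩ).contDiffAt hζ)
      ((hg.contDiffOn hΩ).contDiffAt hζ), sub_div]
  have hcauchy := Complex.norm_iteratedDeriv_le_of_forall_mem_sphere_norm_le n hr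
    ((hf.sub hg).diffContOnCl_ball hball) hfg
  rw [hsub, norm_div, Complex.norm_natCast, div_le_iff₀ (by positivity)]
  calc _ ≤ n ! * δ / r ^ n := hcauchy
    _ = δ / r ^ n * n ! := by ring

end Taylor

lemma exists_forall_dist_truncVec_taylorCoeff_lt {Ω K L : Set ℂ} (hΩ : IsOpen Ω) (hK : K ⊆ Ω)
    (hKc : IsCompact K) (hL : L ⊆ Ω) (hLc : IsCompact L) (N : ℕ) {η : ℝ} (hη : 0 < η) :
    ∃ T ⊆ Ω, IsCompact T ∧ K ⊆ T ∧ ∃ δ > 0, δ ≤ η ∧ ∀ f g : ℂ → ℂ,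
      DifferentiableOn ℂ f Ω → DifferentiableOn ℂ g Ω → (∀ z ∈ T, ‖f z - g z‖ < δ) →
        ∀ ζ ∈ L, dist (truncVec N (taylorCoeff f ζ)) (truncVec N (taylorCoeff g ζ)) < η := by
  obtain ⟨r, hr, hrΩ⟩ :=
    (hKc.union hLc).exists_cthickening_subset_open hΩ (Set.union_subset hK hL)
  set ρ := min r 1
  have hρ : 0 < ρ := lt_min hr one_pos
  have hρ1 : ρ ≤ 1 := min_le_right _ _
  have hρN : ρ ^ N ≤ 1 := pow_le_one₀ hρ.le hρ1
  set T := cthickening ρ (K ∪ L)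
  have hTΩ : T ⊆ Ω := (cthickening_mono (min_le_left _ _) _).trans hrΩ
  refine ⟨T, hTΩ, (hKc.union hLc).cthickening, Set.subset_union_left.trans
    (self_subset_cthickening _), η * ρ ^ N / 2, by positivity, by nlinarith,
    fun f g hf hg hfg ζ hζ => (dist_pi_lt_iff hη).2 fun i => ?_⟩
  have hball : closedBall ζ ρ ⊆ T := closedBall_subset_cthickening (Set.mem_union_right K hζ) ρ
  rw [truncVec, truncVec, dist_eq_norm]
  calc ‖taylorCoeff f ζ i - taylorCoeff g ζ i‖ ≤ η * ρ ^ N / 2 / ρ ^ (i : ℕ) :=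
        norm_taylorCoeff_sub_le hΩ hf hg hρ (hball.trans hTΩ)
          (fun z hz => (hfg z (hball (sphere_subset_closedBall hz))).le) i
    _ ≤ η * ρ ^ N / 2 / ρ ^ N :=
        div_le_div_of_nonneg_left (by positivity) (by positivity)
          (pow_le_pow_of_le_one hρ.le hρ1 i.isLt.le)
    _ < η := by
        rw [mul_div_right_comm, mul_div_assoc, div_self (by positivity)]
        linarith

theorem stmt3_general (Ω : Set ℂ) (hΩ : IsOpen Ω)
    (K L : Set ℂ) (hK : K ⊆ Ω) (hKc : IsCompact K) (hL : L ⊆ Ω) (hLc : IsCompact L)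
    (s : ℕ) (p q : ℕ) :
    HOpen Ω (ESet Ω K L s p q) := by
  refine ⟨fun g hg => hg.1, fun g ⟨hg, hgE⟩ => ?_⟩
  set Φ : ℂ → Fin (p + q + 1) → ℂ := fun ζ => truncVec _ (taylorCoeff g ζ)
  have hΦ : ContinuousOn Φ Ω := continuousOn_pi.2 fun i => continuousOn_taylorCoeff hΩ hg i
  have hΨ : ContinuousOn (fun x : ℂ × ℂ => (Φ x.1, x.2 - x.1, g x.2)) (L ×ˢ K) :=
    (hΦ.comp continuousOn_fst fun x hx => hL hx.1).prodMk <|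
      (continuous_snd.sub continuous_fst).continuousOn.prodMk
        (hg.continuousOn.comp continuousOn_snd fun x hx => hK hx.2)
  obtain ⟨η₁, hη₁, hball₁⟩ := hLc.exists_pos_ball_image_subset (hΦ.mono hL)
    (isOpen_hankelDetNeZeroSet p q) fun ζ hζ => (memD_and_padeApproxOn_iff.1 (hgE ζ hζ)).1
  obtain ⟨η₂, hη₂, hball₂⟩ := (hLc.prod hKc).exists_pos_ball_image_subset hΨ
    (isOpen_padeCloseSet p q (1 / s)) fun x hx =>
      (memD_and_padeApproxOn_iff.1 (hgE x.1 hx.1)).2 x.2 hx.2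
  obtain ⟨T, hTΩ, hTc, hKT, δ, hδ, hδη, hT⟩ :=
    exists_forall_dist_truncVec_taylorCoeff_lt hΩ hK hKc hL hLc (p + q + 1) (lt_min hη₁ hη₂)
  refine ⟨T, hTΩ, hTc, δ, hδ, fun f hf hfg => ⟨hf, fun ζ hζ => ?_⟩⟩
  have hclose := hT f g hf hg hfg ζ hζ
  refine memD_and_padeApproxOn_iff.2 ⟨hball₁ ζ hζ (hclose.trans_le (min_le_left _ _)),
    fun z hz => hball₂ (ζ, z) ⟨hζ, hz⟩ ?_⟩
  have hfz : dist (f z) (g z) < η₂ := by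
    rw [dist_eq_norm]
    exact (hfg z (hKT hz)).trans_le (hδη.trans (min_le_right _ _))
  rw [mem_ball, Prod.dist_eq, Prod.dist_eq, dist_self]
  exact max_lt (hclose.trans_le (min_le_right _ _)) (max_lt hη₂ hfz)

theorem stmt3 (Ω : Set ℂ) (hΩ : IsOpen Ω) (hsc : SimplyConnectedSpace Ω)
    (K L : Set ℂ) (hK : K ⊆ Ω) (hKc : IsCompact K) (hL : L ⊆ Ω) (hLc : IsCompact L)
    (s : ℕ) (hs : 1 ≤ s) (p q : ℕ) :
    HOpen Ω (ESet Ω K L s p q) :=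
  stmt3_general Ω hΩ K L hK hKc hL hLc s p q
end
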